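/- arXiv:2006.07892 — 3 statements merged into one kernel-verified Lean document; each statement's English description precedes it below -/
import Mathlib

section
/- Let φ : (M,g) → (N,h) be a conservative smooth map (i.e., the stress-energy tensor T = φ*h − (|dφ|²/2)g is divergence-free). If the tension field satisfies τ(φ) = dφ(X) for some vector field X on M, then τ(φ) = 0, i.e., φ is harmonic. -/
/-- A conservative smooth map `φ : (M,g) → (N,h)` (i.e. its
stress-energy tensor is divergence free, `div(T)_j = ∑_a τ^a φ^a_j = 0`) whose
tension field satisfies `τ(φ) = dφ(X)` for some vector field `X` is harmonic:
`τ(φ) = 0`.  Stated in components: `φ1 a i = φ^a_i`, `τ a` the components of the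
tension field, `X i` the components of the vector field. -/
theorem stmt_8 (M : Type*) (m n : ℕ)
    (φ1 : Fin n → Fin m → M → ℝ)
    (τ : Fin n → M → ℝ) (X : Fin m → M → ℝ)
    (hconservative : ∀ j x, (∑ a, τ a x * φ1 a j x) = 0)
    (hτ : ∀ a x, τ a x = ∑ i, φ1 a i x * X i x) :
    ∀ a x, τ a x = 0 := by
  intro a x
  have key : ∑ b, (τ b x) ^ 2 = 0 := by
    calc ∑ b, (τ b x) ^ 2 = ∑ b, τ b x * ∑ i, φ1 b i x * X i x := by
          refine Finset.sum_congr rfl fun b _ => ?_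
          rw [← hτ]; ring
      _ = ∑ b, ∑ i, X i x * (τ b x * φ1 b i x) := by
          refine Finset.sum_congr rfl fun b _ => ?_
          rw [Finset.mul_sum]; exact Finset.sum_congr rfl fun i _ => by ring
      _ = ∑ i, X i x * ∑ b, τ b x * φ1 b i x := by
          rw [Finset.sum_comm]; simp [Finset.mul_sum]
      _ = 0 := by simp [hconservative]
  have h2 : (τ a x) ^ 2 = 0 :=
    (Finset.sum_eq_zero_iff_of_nonneg fun b _ => sq_nonneg _).mp key a (Finset.mem_univ a)
  exact pow_eq_zero_iff (by norm_num) |>.mp h2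
end

section
/- Let (M,g) be a Riemannian manifold of dimension m ≥ 2, φ : M → N smooth, α > 0. Define F^φ_{ijk} := R^φ_{ij,k} − R^φ_{ik,j} (the obstruction to Ric^φ being Codazzi) and the φ-Cotton tensor C^φ_{ijk} := A^φ_{ij,k} − A^φ_{ik,j}, where A^φ := Ric^φ − S^φ/(2(m−1))·g. Then |F^φ|² = |C^φ|² + (2α/(m−1))·div(T)(∇S^φ) + (1/(2(m−1)))·|∇S^φ|², where T is the stress-energy tensor of φ. -/
/-- On a Riemannian manifold of dimension `m ≥ 2` with smooth map
`φ : M → N` and `α > 0`, with `F^φ_{ijk} = R^φ_{ij,k} − R^φ_{ik,j}` and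
`C^φ_{ijk} = A^φ_{ij,k} − A^φ_{ik,j}` where `A^φ = Ric^φ − S^φ/(2(m−1)) g`,
one has `|F^φ|² = |C^φ|² + (2α/(m−1)) div(T)(∇S^φ) + (1/(2(m−1))) |∇S^φ|²`,
where `div(T)_i = ∑_a τ^a φ^a_i` for the stress-energy tensor `T` of `φ`.
Stated in components in a local orthonormal frame; the generalized Schur
identity for `Ric^φ` is assumed, as are the symmetry of `Ric^φ` and the
definition of `∇A^φ` from `∇Ric^φ` and `dS^φ`. -/
theorem stmt_10 (M : Type*) (m n : ℕ) (hm : 2 ≤ m) (α : ℝ) (hα : 0 < α)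
    (DRic DA : Fin m → Fin m → Fin m → M → ℝ)
    (DS : Fin m → M → ℝ)
    (φ1 : Fin n → Fin m → M → ℝ) (τ : Fin n → M → ℝ)
    (hsym : ∀ i j k x, DRic i j k x = DRic j i k x)
    (htrace : ∀ k x, DS k x = ∑ i, DRic i i k x)
    (hSchur : ∀ i x, (∑ j, DRic i j j x)
      = (1 / 2) * DS i x - α * ∑ a, τ a x * φ1 a i x)
    (hDA : ∀ i j k x, DA i j k x = DRic i j k x
      - (DS k x / (2 * ((m : ℝ) - 1))) * (if i = j then (1 : ℝ) else 0)) :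
    ∀ x, (∑ i, ∑ j, ∑ k, (DRic i j k x - DRic i k j x) ^ 2)
      = (∑ i, ∑ j, ∑ k, (DA i j k x - DA i k j x) ^ 2)
        + (2 * α / ((m : ℝ) - 1)) * (∑ i, (∑ a, τ a x * φ1 a i x) * DS i x)
        + (1 / (2 * ((m : ℝ) - 1))) * ∑ i, (DS i x) ^ 2 := by
  intro x
  have h2 : (2:ℝ) ≤ (m:ℝ) := by exact_mod_cast hm
  have hβ : ((m:ℝ) - 1) ≠ 0 := by linarith
  set c : ℝ := 1 / (2 * ((m:ℝ) - 1)) with hc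
  set F : Fin m → Fin m → Fin m → ℝ := fun i j k => DRic i j k x - DRic i k j x with hF
  set Q : Fin m → ℝ := fun k => DS k x with hQ
  set D : Fin m → ℝ := fun i => ∑ a, τ a x * φ1 a i x with hD
  -- key Schur-type identity
  have hB : ∀ k, (∑ i, F i i k) = (1/2) * Q k + α * D k := by
    intro k
    have h1 : ∑ i, F i i k = (∑ i, DRic i i k x) - (∑ i, DRic i k i x) := by
      simp [hF, Finset.sum_sub_distrib]
    have h2' : (∑ i, DRic i k i x) = ∑ i, DRic k i i x :=
      Finset.sum_congr rfl (fun i _ => hsym i k i x)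
    rw [h1, h2', hSchur, ← htrace]
    simp only [hQ, hD]
    ring
  -- rewrite DA-difference
  have hCd : ∀ i j k, DA i j k x - DA i k j x
      = F i j k - c * Q k * (if i = j then (1:ℝ) else 0)
        + c * Q j * (if i = k then (1:ℝ) else 0) := by
    intro i j k
    simp only [hDA, hF, hQ, hc]
    ring
  -- pointwise expansion of the square
  have hpt : ∀ i j k : Fin m,
      (F i j k - c * Q k * (if i = j then (1:ℝ) else 0)
        + c * Q j * (if i = k then (1:ℝ) else 0)) ^ 2
      = F i j k ^ 2
        + c^2 * Q k ^2 * (if i = j then (1:ℝ) else 0)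
        + c^2 * Q j ^2 * (if i = k then (1:ℝ) else 0)
        - 2*c * (F i j k * Q k) * (if i = j then (1:ℝ) else 0)
        + 2*c * (F i j k * Q j) * (if i = k then (1:ℝ) else 0)
        - 2*c^2 * (Q k * Q j) * ((if i = j then (1:ℝ) else 0) * (if i = k then (1:ℝ) else 0)) := by
    intro i j k
    by_cases h1 : i = j
    · subst h1
      by_cases h2 : i = k
      · subst h2; simp <;> ring
      · simp [h2] <;> ring
    · by_cases h2 : i = k
      · subst h2; simp [h1] <;> ring
      · simp [h1, h2] <;> ring
  -- evaluate the delta sums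
  have e1 : ∑ i : Fin m, ∑ j : Fin m, ∑ k : Fin m, c^2 * Q k ^2 * (if i = j then (1:ℝ) else 0)
      = (m:ℝ) * (c^2 * ∑ k, Q k ^2) := by
    simp only [← Finset.sum_mul, ← Finset.mul_sum]
    simp [Finset.sum_ite_eq, Finset.mul_sum, mul_comm]
  have e2 : ∑ i : Fin m, ∑ j : Fin m, ∑ k : Fin m, c^2 * Q j ^2 * (if i = k then (1:ℝ) else 0)
      = (m:ℝ) * (c^2 * ∑ k, Q k ^2) := by
    have : ∀ i : Fin m, ∑ j : Fin m, ∑ k : Fin m, c^2 * Q j ^2 * (if i = k then (1:ℝ) else 0)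
        = c^2 * ∑ k, Q k ^2 := by
      intro i
      rw [Finset.sum_comm]
      simp [Finset.sum_ite_eq, Finset.mul_sum]
    simp [this, Finset.mul_sum, mul_comm]
  have e3 : ∑ i : Fin m, ∑ j : Fin m, ∑ k : Fin m, 2*c * (F i j k * Q k) * (if i = j then (1:ℝ) else 0)
      = 2*c * ∑ k, (∑ i, F i i k) * Q k := by
    have h1 : ∀ i : Fin m, ∑ j : Fin m, ∑ k : Fin m, 2*c * (F i j k * Q k) * (if i = j then (1:ℝ) else 0)
        = ∑ k, 2*c * (F i i k * Q k) := by
      intro i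
      rw [Finset.sum_comm]
      simp [Finset.sum_ite_eq]
    rw [Finset.sum_congr rfl (fun i _ => h1 i), Finset.sum_comm, Finset.mul_sum]
    apply Finset.sum_congr rfl
    intro k _
    rw [Finset.sum_mul, Finset.mul_sum]
  have e4 : ∑ i : Fin m, ∑ j : Fin m, ∑ k : Fin m, 2*c * (F i j k * Q j) * (if i = k then (1:ℝ) else 0)
      = -(2*c * ∑ k, (∑ i, F i i k) * Q k) := by
    have h1 : ∀ i : Fin m, ∑ j : Fin m, ∑ k : Fin m, 2*c * (F i j k * Q j) * (if i = k then (1:ℝ) else 0)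
        = ∑ j, 2*c * (F i j i * Q j) := by
      intro i
      apply Finset.sum_congr rfl
      intro j _
      simp [Finset.sum_ite_eq]
    have h2' : ∀ i j : Fin m, F i j i = -(F i i j) := by
      intro i j; simp only [hF]; ring
    rw [Finset.sum_congr rfl (fun i _ => h1 i), Finset.sum_comm]
    have h3 : ∀ k : Fin m, ∑ i : Fin m, 2*c * (F i k i * Q k)
        = -((∑ i, F i i k) * Q k * (2*c)) := by
      intro k
      rw [Finset.sum_mul, Finset.sum_mul, ← Finset.sum_neg_distrib]
      apply Finset.sum_congr rfl
      intro i _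
      rw [h2' i k]
      ring
    rw [Finset.sum_congr rfl (fun k _ => h3 k), Finset.sum_neg_distrib, Finset.mul_sum]
    congr 1
    apply Finset.sum_congr rfl
    intro k _
    ring
  have e6 : ∑ i : Fin m, ∑ j : Fin m, ∑ k : Fin m, 2*c^2 * (Q k * Q j) * ((if i = j then (1:ℝ) else 0) * (if i = k then (1:ℝ) else 0))
      = 2*c^2 * ∑ i, Q i ^2 := by
    have h1 : ∀ i : Fin m, ∑ j : Fin m, ∑ k : Fin m,
        2*c^2 * (Q k * Q j) * ((if i = j then (1:ℝ) else 0) * (if i = k then (1:ℝ) else 0))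
        = 2*c^2 * Q i ^2 := by
      intro i
      have h2' : ∀ j : Fin m, ∑ k : Fin m,
          2*c^2 * (Q k * Q j) * ((if i = j then (1:ℝ) else 0) * (if i = k then (1:ℝ) else 0))
          = (if i = j then 2*c^2 * (Q i * Q j) else 0) := by
        intro j
        have h3 : ∀ k : Fin m,
            2*c^2 * (Q k * Q j) * ((if i = j then (1:ℝ) else 0) * (if i = k then (1:ℝ) else 0))
            = (if i = k then (if i = j then 2*c^2 * (Q k * Q j) else 0) else 0) := by
          intro k
          by_cases hk : i = k <;> by_cases hj : i = j <;> simp [hk, hj]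
        rw [Finset.sum_congr rfl (fun k _ => h3 k), Finset.sum_ite_eq]
        simp
      rw [Finset.sum_congr rfl (fun j _ => h2' j), Finset.sum_ite_eq]
      simp only [Finset.mem_univ, if_true]
      ring
    rw [Finset.sum_congr rfl (fun i _ => h1 i), ← Finset.mul_sum]
  -- put the expansion together
  have hexp : ∑ i, ∑ j, ∑ k, (DA i j k x - DA i k j x) ^ 2
      = (∑ i, ∑ j, ∑ k, F i j k ^ 2)
        + (m:ℝ) * (c^2 * ∑ k, Q k ^2) + (m:ℝ) * (c^2 * ∑ k, Q k ^2)
        - 2*c * (∑ k, (∑ i, F i i k) * Q k)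
        + (-(2*c * ∑ k, (∑ i, F i i k) * Q k))
        - 2*c^2 * ∑ i, Q i ^2 := by
    have hstep : ∑ i, ∑ j, ∑ k, (DA i j k x - DA i k j x) ^ 2
        = ∑ i : Fin m, ∑ j : Fin m, ∑ k : Fin m,
            (F i j k ^ 2
              + c^2 * Q k ^2 * (if i = j then (1:ℝ) else 0)
              + c^2 * Q j ^2 * (if i = k then (1:ℝ) else 0)
              - 2*c * (F i j k * Q k) * (if i = j then (1:ℝ) else 0)
              + 2*c * (F i j k * Q j) * (if i = k then (1:ℝ) else 0)
              - 2*c^2 * (Q k * Q j) * ((if i = j then (1:ℝ) else 0) * (if i = k then (1:ℝ) else 0))) := by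
      apply Finset.sum_congr rfl; intro i _
      apply Finset.sum_congr rfl; intro j _
      apply Finset.sum_congr rfl; intro k _
      rw [hCd, hpt]
    rw [hstep]
    simp only [Finset.sum_add_distrib, Finset.sum_sub_distrib]
    rw [e1, e2, e3, e4, e6]
  -- evaluate the B-sum
  have hBsum : ∑ k, (∑ i, F i i k) * Q k
      = (1/2) * (∑ i, Q i ^2) + α * ∑ i, D i * Q i := by
    rw [Finset.mul_sum, Finset.mul_sum, ← Finset.sum_add_distrib]
    apply Finset.sum_congr rfl
    intro k _
    rw [hB]
    ring
  rw [hexp, hBsum]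
  have hgoal : ∀ A P G : ℝ,
      A = A + (m:ℝ) * (c^2*P) + (m:ℝ)*(c^2*P) - 2*c*((1/2)*P + α*G) + (-(2*c*((1/2)*P + α*G)))
        - 2*c^2*P + (2*α/((m:ℝ)-1))*G + (1/(2*((m:ℝ)-1)))*P := by
    intro A P G
    rw [hc]
    field_simp
    ring
  exact hgoal (∑ i, ∑ j, ∑ k, F i j k ^ 2) (∑ i, Q i ^2) (∑ i, D i * Q i)
end

section
/- With notation as above, if the φ-Cotton tensor vanishes (C^φ = 0), then |F^φ|² = (1/(2(m−1)))·|∇S^φ|². Consequently, if moreover F^φ = 0 then S^φ is constant. -/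
theorem sum_helper (m : ℕ) (S : Fin m → ℝ) (c : ℝ) :
    ∑ i, ∑ j, ∑ k, (c * (S k * (if i = j then (1:ℝ) else 0)
        - S j * (if i = k then (1:ℝ) else 0)))^2
      = c^2 * (2 * ((m:ℝ) - 1)) * ∑ i, (S i)^2 := by
  set Q := ∑ i, (S i)^2 with hQ
  have step1 : ∀ i j : Fin m, ∑ k, (c * (S k * (if i = j then (1:ℝ) else 0)
        - S j * (if i = k then (1:ℝ) else 0)))^2
      = c^2*Q*(if i = j then (1:ℝ) else 0) + c^2*(S j)^2
        - 2*c^2*(S i)*(S j)*(if i = j then (1:ℝ) else 0) := by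
    intro i j
    by_cases hij : i = j
    · subst hij
      simp only [eq_self_iff_true, if_true, mul_one]
      have h1 : ∀ k : Fin m, (c * (S k - S i * (if i = k then (1:ℝ) else 0)))^2
          = c^2*(S k)^2 - (if i = k then c^2*(S i)^2 else 0) := by
        intro k
        by_cases h : i = k
        · rw [if_pos h, if_pos h, ← h]; ring
        · rw [if_neg h, if_neg h]; ring
      rw [Finset.sum_congr rfl fun k _ => h1 k, Finset.sum_sub_distrib]
      rw [Finset.sum_ite_eq]
      simp only [Finset.mem_univ, if_true, ← Finset.mul_sum, ← hQ]
      ring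
    · simp only [if_neg hij, mul_zero, zero_mul]
      have h1 : ∀ k : Fin m, (c * (0 - S j * (if i = k then (1:ℝ) else 0)))^2
          = (if i = k then c^2*(S j)^2 else 0) := by
        intro k
        by_cases h : i = k
        · rw [if_pos h, if_pos h]; ring
        · rw [if_neg h, if_neg h]; ring
      rw [Finset.sum_congr rfl fun k _ => h1 k, Finset.sum_ite_eq]
      simp only [Finset.mem_univ, if_true]
      ring
  have step2 : ∀ i : Fin m, ∑ j, (c^2*Q*(if i = j then (1:ℝ) else 0) + c^2*(S j)^2
        - 2*c^2*(S i)*(S j)*(if i = j then (1:ℝ) else 0))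
      = 2*c^2*Q - 2*c^2*(S i)^2 := by
    intro i
    rw [Finset.sum_sub_distrib, Finset.sum_add_distrib]
    have e1 : ∑ j : Fin m, c^2*Q*(if i = j then (1:ℝ) else 0)
        = c^2*Q := by
      simp [mul_ite, Finset.sum_ite_eq]
    have e2 : ∑ j : Fin m, 2*c^2*(S i)*(S j)*(if i = j then (1:ℝ) else 0)
        = 2*c^2*(S i)*(S i) := by
      simp [mul_ite, Finset.sum_ite_eq]
    rw [e1, e2, ← Finset.mul_sum, ← hQ]
    ring
  calc ∑ i, ∑ j, ∑ k, (c * (S k * (if i = j then (1:ℝ) else 0)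
        - S j * (if i = k then (1:ℝ) else 0)))^2
      = ∑ i : Fin m, (2*c^2*Q - 2*c^2*(S i)^2) := by
        refine Finset.sum_congr rfl fun i _ => ?_
        rw [Finset.sum_congr rfl fun j _ => step1 i j, step2 i]
    _ = c^2 * (2 * ((m:ℝ) - 1)) * Q := by
        rw [Finset.sum_sub_distrib, Finset.sum_const, ← Finset.mul_sum, ← hQ]
        simp only [Finset.card_univ, Fintype.card_fin, nsmul_eq_mul]
        ring

/-- In the setting of Statement 10 (connected `M`, `m ≥ 2`,
`α > 0`), if the `φ`-Cotton tensor vanishes, `C^φ = 0`, then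
`|F^φ|² = (1/(2(m−1))) |∇S^φ|²`; consequently, if moreover `F^φ = 0` then the
`φ`-scalar curvature `S^φ` is constant. -/
theorem stmt_11 (M : Type*) (m n : ℕ) (hm : 2 ≤ m) (α : ℝ) (hα : 0 < α)
    (Sφ : M → ℝ)
    (DRic DA : Fin m → Fin m → Fin m → M → ℝ)
    (DS : Fin m → M → ℝ)
    (φ1 : Fin n → Fin m → M → ℝ) (τ : Fin n → M → ℝ)
    (hsym : ∀ i j k x, DRic i j k x = DRic j i k x)
    (htrace : ∀ k x, DS k x = ∑ i, DRic i i k x)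
    (hSchur : ∀ i x, (∑ j, DRic i j j x)
      = (1 / 2) * DS i x - α * ∑ a, τ a x * φ1 a i x)
    (hDA : ∀ i j k x, DA i j k x = DRic i j k x
      - (DS k x / (2 * ((m : ℝ) - 1))) * (if i = j then (1 : ℝ) else 0))
    (hconnected : (∀ i x, DS i x = 0) → ∃ cst, ∀ x, Sφ x = cst)
    (hCotton : ∀ i j k x, DA i j k x - DA i k j x = 0) :
    (∀ x, (∑ i, ∑ j, ∑ k, (DRic i j k x - DRic i k j x) ^ 2)
      = (1 / (2 * ((m : ℝ) - 1))) * ∑ i, (DS i x) ^ 2) ∧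
    ((∀ i j k x, DRic i j k x - DRic i k j x = 0) → ∃ cst, ∀ x, Sφ x = cst) := by
  have hm1 : ((m:ℝ) - 1) ≠ 0 := by
    have : (2:ℝ) ≤ (m:ℝ) := by exact_mod_cast hm
    linarith
  have key : ∀ i j k x, DRic i j k x - DRic i k j x
      = (1 / (2 * ((m:ℝ) - 1))) * (DS k x * (if i = j then (1:ℝ) else 0)
          - DS j x * (if i = k then (1:ℝ) else 0)) := by
    intro i j k x
    have h := hCotton i j k x
    rw [hDA i j k x, hDA i k j x] at h
    linear_combination h
  constructor
  · intro x
    calc ∑ i, ∑ j, ∑ k, (DRic i j k x - DRic i k j x) ^ 2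
        = ∑ i, ∑ j, ∑ k, ((1 / (2 * ((m:ℝ) - 1)))
            * (DS k x * (if i = j then (1:ℝ) else 0)
              - DS j x * (if i = k then (1:ℝ) else 0)))^2 := by
          refine Finset.sum_congr rfl fun i _ => Finset.sum_congr rfl fun j _ =>
            Finset.sum_congr rfl fun k _ => ?_
          rw [key i j k x]
      _ = (1 / (2 * ((m:ℝ) - 1)))^2 * (2 * ((m:ℝ) - 1)) * ∑ i, (DS i x)^2 :=
          sum_helper m (fun k => DS k x) _
      _ = (1 / (2 * ((m:ℝ) - 1))) * ∑ i, (DS i x)^2 := by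
          field_simp
  · intro hF
    apply hconnected
    intro k x
    obtain ⟨i, hi⟩ : ∃ i : Fin m, i ≠ k :=
      Fintype.exists_ne_of_one_lt_card (by simp; omega) k
    have h := key i i k x
    rw [hF, if_pos rfl, if_neg hi] at h
    have h2 : (1 / (2 * ((m:ℝ) - 1))) * DS k x = 0 := by linarith [h]
    have hc : (1 / (2 * ((m:ℝ) - 1))) ≠ 0 := by
      simp [hm1]
    rcases mul_eq_zero.mp h2 with h3 | h3
    · exact absurd h3 hc
    · exact h3
end
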